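/- Let G be a finite group, p a prime, and H ≤ G a subgroup. Then H contains O^p(G) if and only if H is p-subnormal in G, i.e. there exists a chain of subgroups H = H_0 ⊴ H_1 ⊴ ... ⊴ H_n = G with each H_i normal in H_{i+1} of index a power of p. -/

import Mathlib

/-!
`O^p(G)` is the subgroup generated by the elements of order prime to `p`: such an element is
killed by every quotient of `p`-power order, and modulo these elements every element has
`p`-power order.

A `p'`-element of `K` lies in every normal subgroup of `K` of `p`-power index, so it descends
along a `p`-subnormal chain down to `H`. Conversely, let `O^p(G) ≤ H < G`. As `G / O^p(G)` is a
`p`-group, hence nilpotent, `H` is strictly smaller than its normalizer, in which it is normal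
of index dividing `|G / O^p(G)|`; induction on `H` with respect to reverse inclusion extends
the chain from the normalizer down to `H`.
-/

/-- `O^p(G)`: the smallest normal subgroup of `G` whose index is a power of `p`. -/
def pResidual (p : ℕ) (G : Type*) [Group G] : Subgroup G :=
  sInf {N : Subgroup G | N.Normal ∧ ∃ k : ℕ, N.index = p ^ k}

/-- A subgroup `H ≤ G` is `p`-subnormal if there is a chain
`H = H_0 ⊴ H_1 ⊴ ... ⊴ H_n = G` with each term normal of `p`-power index in the next. -/
def IsPSubnormal (p : ℕ) {G : Type*} [Group G] (H : Subgroup G) : Prop :=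
  ∃ (n : ℕ) (c : Fin (n + 1) → Subgroup G), c 0 = H ∧ c (Fin.last n) = ⊤ ∧
    ∀ i : Fin n, ((c i.castSucc).subgroupOf (c i.succ)).Normal ∧
      ∃ k : ℕ, ((c i.castSucc).subgroupOf (c i.succ)).index = p ^ k

open Subgroup

section

variable {G : Type*} [Group G] {p : ℕ}

namespace Subgroup

theorem mem_of_coprime_orderOf {N : Subgroup G} [N.Normal] {k : ℕ} (hN : N.index = p ^ k)
    {x : G} (hx : (orderOf x).Coprime p) : x ∈ N := by
  rw [← QuotientGroup.eq_one_iff, ← orderOf_eq_one_iff]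
  refine Nat.eq_one_of_dvd_coprimes (hx.pow_right k) (orderOf_map_dvd (QuotientGroup.mk' N) x) ?_
  rw [← hN, N.index_eq_card]
  exact _root_.orderOf_dvd_natCard _

theorem lt_normalizer_of_isNilpotent_quotient {N H : Subgroup G} [N.Normal]
    [Group.IsNilpotent (G ⧸ N)] (hNH : N ≤ H) (hH : H ≠ ⊤) : H < normalizer (H : Set G) := by
  have hsurj := QuotientGroup.mk'_surjective N
  have hH' : H = (H.map (QuotientGroup.mk' N)).comap (QuotientGroup.mk' N) := by
    rw [comap_map_eq, QuotientGroup.ker_mk', sup_eq_left.mpr hNH]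
  rw [hH', ← comap_normalizer_eq_of_surjective _ hsurj, comap_lt_comap_of_surjective hsurj]
  refine Group.normalizerCondition_of_isNilpotent _ (lt_top_iff_ne_top.mpr fun htop => hH ?_)
  rw [hH', htop, comap_top]

end Subgroup

def closureCoprimeOrder (p : ℕ) (G : Type*) [Group G] : Subgroup G :=
  closure {g : G | (orderOf g).Coprime p}

instance : (closureCoprimeOrder p G).Normal := by
  refine normalizer_eq_top_iff.mp (top_le_iff.mp (le_normalizer_closure_iff.mpr ?_))
  intro h _ g hg
  refine subset_closure ?_
  rwa [Set.mem_ofPred_eq, ← (SemiconjBy.conj_mk h g).orderOf_eq]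

theorem closureCoprimeOrder_le {N : Subgroup G} [N.Normal] {k : ℕ} (hN : N.index = p ^ k) :
    closureCoprimeOrder p G ≤ N :=
  (closure_le _).mpr fun _ => mem_of_coprime_orderOf hN

theorem isPGroup_quotient_closureCoprimeOrder [Finite G] (hp : p.Prime) :
    IsPGroup p (G ⧸ closureCoprimeOrder p G) := by
  intro q
  obtain ⟨x, rfl⟩ := QuotientGroup.mk_surjective q
  -- `x ^ p ^ a`, with `p ^ a` the `p`-part of the order of `x`, has order prime to `p`.
  refine ⟨(orderOf x).factorization p, ?_⟩
  rw [← QuotientGroup.mk_pow, QuotientGroup.eq_one_iff]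
  refine subset_closure ?_
  rw [Set.mem_ofPred_eq, orderOf_pow_of_dvd (pow_ne_zero _ hp.ne_zero) (Nat.ordProj_dvd _ _)]
  exact (Nat.coprime_ordCompl hp (orderOf_pos x).ne').symm

theorem pResidual_eq_closureCoprimeOrder [Finite G] (hp : p.Prime) :
    pResidual p G = closureCoprimeOrder p G := by
  have : Fact p.Prime := ⟨hp⟩
  refine le_antisymm (sInf_le ⟨inferInstance, ?_⟩) (le_sInf fun N ⟨hN, _, hk⟩ => ?_)
  · exact IsPGroup.iff_card.mp (isPGroup_quotient_closureCoprimeOrder hp)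
  · exact closureCoprimeOrder_le hk

namespace IsPSubnormal

theorem top : IsPSubnormal p (⊤ : Subgroup G) :=
  ⟨0, fun _ => ⊤, rfl, rfl, fun i => i.elim0⟩

theorem of_subgroupOf {H K : Subgroup G} (hK : IsPSubnormal p K) (hHK : (H.subgroupOf K).Normal)
    (hidx : ∃ k : ℕ, (H.subgroupOf K).index = p ^ k) : IsPSubnormal p H := by
  obtain ⟨n, c, rfl, hlast, hc⟩ := hK
  exact ⟨n + 1, Fin.cons H c, rfl, hlast, Fin.cases ⟨hHK, hidx⟩ hc⟩

theorem induction {motive : Subgroup G → Prop} (top : motive ⊤)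
    (step : ∀ H K : Subgroup G, (H.subgroupOf K).Normal →
      (∃ k : ℕ, (H.subgroupOf K).index = p ^ k) → motive K → motive H)
    {H : Subgroup G} (hH : IsPSubnormal p H) : motive H := by
  obtain ⟨n, c, rfl, hlast, hc⟩ := hH
  induction n with
  | zero => exact hlast ▸ top
  | succ n ih =>
    exact step _ _ (hc 0).1 (hc 0).2 (ih (Fin.tail c) hlast fun i => hc i.succ)

theorem closureCoprimeOrder_le {H : Subgroup G} (hH : IsPSubnormal p H) :
    closureCoprimeOrder p G ≤ H := by
  refine (closure_le _).mpr <| hH.induction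
    (motive := fun K : Subgroup G => {g : G | (orderOf g).Coprime p} ⊆ (K : Set G))
    (Set.subset_univ _) fun H K _ ⟨k, hk⟩ hK x hx => ?_
  have : (⟨x, hK hx⟩ : K) ∈ H.subgroupOf K := mem_of_coprime_orderOf hk (by rwa [orderOf_mk])
  exact mem_subgroupOf.mp this

end IsPSubnormal

theorem isPSubnormal_of_isPGroup_quotient_of_le [Finite G] (hp : p.Prime) {N H : Subgroup G}
    [N.Normal] (hN : IsPGroup p (G ⧸ N)) (hNH : N ≤ H) : IsPSubnormal p H := by
  have : Fact p.Prime := ⟨hp⟩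
  have : Group.IsNilpotent (G ⧸ N) := hN.isNilpotent
  obtain ⟨k, hk⟩ := IsPGroup.iff_card.mp hN
  induction H using WellFoundedGT.induction with
  | _ H ih =>
  by_cases hH : H = ⊤
  · exact hH ▸ IsPSubnormal.top
  have hlt := lt_normalizer_of_isNilpotent_quotient hNH hH
  refine (ih _ hlt (hNH.trans hlt.le)).of_subgroupOf normal_in_normalizer ?_
  have hdvd : H.relIndex (normalizer (H : Set G)) ∣ p ^ k :=
    hk ▸ (relIndex_dvd_of_le_left _ hNH).trans (relIndex_dvd_index_of_normal _ _)
  obtain ⟨m, -, hm⟩ := (Nat.dvd_prime_pow hp).mp hdvd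
  exact ⟨m, hm⟩

end

/-- For a finite group `G` and a prime `p`, a subgroup `H` contains `O^p(G)` if and
only if `H` is `p`-subnormal in `G`. -/
theorem stmt8 (G : Type*) [Group G] [Finite G] (p : ℕ) (hp : p.Prime) (H : Subgroup G) :
    pResidual p G ≤ H ↔ IsPSubnormal p H := by
  rw [pResidual_eq_closureCoprimeOrder hp]
  exact ⟨isPSubnormal_of_isPGroup_quotient_of_le hp (isPGroup_quotient_closureCoprimeOrder hp),
    IsPSubnormal.closureCoprimeOrder_le⟩
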